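/- The deduction system consisting of the rules (Ax) and (Cut_i) — where (Cut_i) infers A ∪ (C + i) ⇒ D + i from A ⇒ B + i and B ∪ C ⇒ D, for any i ∈ ℤ — proves exactly the same formulas from any theory Σ as the system consisting of (Ax), (Cut), and (Shf). -/

import Mathlib

namespace TAI

variable {Y : Type*}

/-- Time shift of a set of time-annotated attributes: `M + j`. -/
def shiftS (M : Set (Y × ℤ)) (j : ℤ) : Set (Y × ℤ) :=
  (fun p : Y × ℤ => (p.1, p.2 + j)) '' M

/-- Time shift of a finite set of time-annotated attributes: `A + j`. -/
def shiftF [DecidableEq Y] (A : Finset (Y × ℤ)) (j : ℤ) : Finset (Y × ℤ) :=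
  A.image (fun p => (p.1, p.2 + j))

/-- An attribute implication over `Y` annotated by time points: a pair
`(A, B)` of finite subsets of `T_Y = Y × ℤ`, read as `A ⇒ B`. -/
abbrev Fml (Y : Type*) := Finset (Y × ℤ) × Finset (Y × ℤ)

/-- `A ⇒ B` is true in `M ⊆ T_Y`: for every `i ∈ ℤ`, `A + i ⊆ M` implies `B + i ⊆ M`. -/
def Holds [DecidableEq Y] (M : Set (Y × ℤ)) (φ : Fml Y) : Prop :=
  ∀ i : ℤ, ↑(shiftF φ.1 i) ⊆ M → ↑(shiftF φ.2 i) ⊆ M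

/-- The models of a theory `T`. -/
def Mods [DecidableEq Y] (T : Set (Fml Y)) : Set (Set (Y × ℤ)) :=
  {M | ∀ φ ∈ T, Holds M φ}

/-- Semantic entailment: `T ⊨ φ`. -/
def Entails [DecidableEq Y] (T : Set (Fml Y)) (φ : Fml Y) : Prop :=
  ∀ M ∈ Mods T, Holds M φ

/-- Semantic closure `[M]_Σ`. -/
def semClos [DecidableEq Y] (T : Set (Fml Y)) (M : Set (Y × ℤ)) : Set (Y × ℤ) :=
  ⋂₀ {N | N ∈ Mods T ∧ M ⊆ N}

/-- Classical (time-point-free) truth: `M ⊨_PL A ⇒ B` iff `A ⊆ M` implies `B ⊆ M`. -/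
def HoldsPL (M : Set (Y × ℤ)) (φ : Fml Y) : Prop :=
  ↑φ.1 ⊆ M → ↑φ.2 ⊆ M

/-- Classical models. -/
def ModsPL (T : Set (Fml Y)) : Set (Set (Y × ℤ)) :=
  {M | ∀ φ ∈ T, HoldsPL M φ}

/-- Classical semantic entailment `⊨_PL`. -/
def EntailsPL (T : Set (Fml Y)) (φ : Fml Y) : Prop :=
  ∀ M ∈ ModsPL T, HoldsPL M φ

/-- `Σ^PL = {A + i ⇒ B + i | A ⇒ B ∈ Σ, i ∈ ℤ}`. -/
def shiftAll [DecidableEq Y] (T : Set (Fml Y)) : Set (Fml Y) :=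
  {ψ | ∃ φ ∈ T, ∃ i : ℤ, ψ = (shiftF φ.1 i, shiftF φ.2 i)}

/-- One step of the syntactic closure construction. -/
def synStep [DecidableEq Y] (T : Set (Fml Y)) (M : Set (Y × ℤ)) : Set (Y × ℤ) :=
  M ∪ ⋃₀ {S | ∃ φ ∈ T, ∃ i : ℤ, ↑(shiftF φ.1 i) ⊆ M ∧ S = (↑(shiftF φ.2 i) : Set (Y × ℤ))}

/-- `M_Σ^n`. -/
def synIter [DecidableEq Y] (T : Set (Fml Y)) (M : Set (Y × ℤ)) : ℕ → Set (Y × ℤ)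
  | 0 => M
  | n + 1 => synStep T (synIter T M n)

/-- The syntactic closure `M_Σ^ω`. -/
def synClos [DecidableEq Y] (T : Set (Fml Y)) (M : Set (Y × ℤ)) : Set (Y × ℤ) :=
  ⋃ n : ℕ, synIter T M n

/-- Provability from `T` using the rules (Ax), (Cut) and (Shf). -/
inductive Prov [DecidableEq Y] (T : Set (Fml Y)) : Fml Y → Prop
  | hyp {φ : Fml Y} : φ ∈ T → Prov T φ
  | ax (A B : Finset (Y × ℤ)) : Prov T (A ∪ B, A)
  | cut {A B C D : Finset (Y × ℤ)} :
      Prov T (A, B) → Prov T (B ∪ C, D) → Prov T (A ∪ C, D)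
  | shf {A B : Finset (Y × ℤ)} (i : ℤ) :
      Prov T (A, B) → Prov T (shiftF A i, shiftF B i)

/-- Provability from `T` using only the rules (Ax) and (Cut) (no time shifts). -/
inductive ProvAC [DecidableEq Y] (T : Set (Fml Y)) : Fml Y → Prop
  | hyp {φ : Fml Y} : φ ∈ T → ProvAC T φ
  | ax (A B : Finset (Y × ℤ)) : ProvAC T (A ∪ B, A)
  | cut {A B C D : Finset (Y × ℤ)} :
      ProvAC T (A, B) → ProvAC T (B ∪ C, D) → ProvAC T (A ∪ C, D)

/-- Provability from `T` using the rules (Ax) and (Cut_i). -/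
inductive ProvCuti [DecidableEq Y] (T : Set (Fml Y)) : Fml Y → Prop
  | hyp {φ : Fml Y} : φ ∈ T → ProvCuti T φ
  | ax (A B : Finset (Y × ℤ)) : ProvCuti T (A ∪ B, A)
  | cuti {A B C D : Finset (Y × ℤ)} (i : ℤ) :
      ProvCuti T (A, shiftF B i) → ProvCuti T (B ∪ C, D) →
      ProvCuti T (A ∪ shiftF C i, shiftF D i)

/-- Provability from `T` using the rules (Ref) and (Sim_i). -/
inductive ProvRS [DecidableEq Y] (T : Set (Fml Y)) : Fml Y → Prop
  | hyp {φ : Fml Y} : φ ∈ T → ProvRS T φ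
  | ref (A : Finset (Y × ℤ)) : ProvRS T (A, A)
  | simi {A B C D : Finset (Y × ℤ)} (i : ℤ) :
      ProvRS T (A, shiftF B i) → ProvRS T (C, D) →
      ProvRS T (A ∪ shiftF (C \ B) i, shiftF D i)

/-- The closure operator induced by a closure system `S`. -/
def closOp (S : Set (Set (Y × ℤ))) (M : Set (Y × ℤ)) : Set (Y × ℤ) :=
  ⋂₀ {N | N ∈ S ∧ M ⊆ N}

/-- The least time point occurring in a finite set (`0` for the empty set). -/
def lo (A : Finset (Y × ℤ)) : ℤ :=
  WithTop.untopD 0 (A.image Prod.snd).min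

/-- The greatest time point occurring in a finite set (`0` for the empty set). -/
def hi (A : Finset (Y × ℤ)) : ℤ :=
  WithBot.unbotD 0 (A.image Prod.snd).max

/-- A formula `A ⇒ B` is predictive if `A ≠ ∅`, `B ≠ ∅`, and every time point in
`A` is less than or equal to every time point in `B`. -/
def Predictive (φ : Fml Y) : Prop :=
  φ.1.Nonempty ∧ φ.2.Nonempty ∧ ∀ p ∈ φ.1, ∀ q ∈ φ.2, p.2 ≤ q.2

/-! Each system derives the other's extra rules: (Cut) is (Cut_0), and (Shf) is (Cut_i) applied
to the axiom `A + i ⇒ A + i` and `A ∪ ∅ ⇒ B`; conversely (Cut_i) is (Shf) by `i` of its second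
premise followed by (Cut). -/

section Shift

variable [DecidableEq Y]

@[simp]
lemma shiftF_zero (A : Finset (Y × ℤ)) : shiftF A 0 = A := by
  simp [shiftF]

@[simp]
lemma shiftF_empty (i : ℤ) : shiftF (∅ : Finset (Y × ℤ)) i = ∅ := by
  simp [shiftF]

lemma shiftF_union (A B : Finset (Y × ℤ)) (i : ℤ) :
    shiftF (A ∪ B) i = shiftF A i ∪ shiftF B i :=
  Finset.image_union A B

end Shift

namespace ProvCuti

variable [DecidableEq Y] {T : Set (Fml Y)}

lemma refl (A : Finset (Y × ℤ)) : ProvCuti T (A, A) := by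
  simpa using ProvCuti.ax (T := T) A A

lemma cut {A B C D : Finset (Y × ℤ)} (hAB : ProvCuti T (A, B)) (hBCD : ProvCuti T (B ∪ C, D)) :
    ProvCuti T (A ∪ C, D) := by
  simpa using ProvCuti.cuti 0 (by simpa using hAB) hBCD

lemma shf {A B : Finset (Y × ℤ)} (i : ℤ) (hAB : ProvCuti T (A, B)) :
    ProvCuti T (shiftF A i, shiftF B i) := by
  simpa using ProvCuti.cuti (C := ∅) i (refl (shiftF A i)) (by simpa using hAB)

lemma of_prov {φ : Fml Y} (h : Prov T φ) : ProvCuti T φ := by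
  induction h with
  | hyp h => exact hyp h
  | ax A B => exact ax A B
  | cut _ _ ihAB ihBCD => exact ihAB.cut ihBCD
  | shf i _ ih => exact ih.shf i

end ProvCuti

namespace Prov

variable [DecidableEq Y] {T : Set (Fml Y)}

lemma cuti {A B C D : Finset (Y × ℤ)} (i : ℤ) (hAB : Prov T (A, shiftF B i))
    (hBCD : Prov T (B ∪ C, D)) : Prov T (A ∪ shiftF C i, shiftF D i) :=
  hAB.cut (by simpa only [shiftF_union] using hBCD.shf i)

lemma of_provCuti {φ : Fml Y} (h : ProvCuti T φ) : Prov T φ := by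
  induction h with
  | hyp h => exact hyp h
  | ax A B => exact ax A B
  | cuti i _ _ ihAB ihBCD => exact ihAB.cuti i ihBCD

end Prov

theorem prov_iff_provCuti_general [DecidableEq Y] :
    ∀ (T : Set (Fml Y)) (φ : Fml Y), Prov T φ ↔ ProvCuti T φ :=
  fun _ _ => ⟨ProvCuti.of_prov, Prov.of_provCuti⟩

/-- the system with rules (Ax) and (Cut_i) proves exactly the
same formulas from any theory as the system with (Ax), (Cut) and (Shf). -/
theorem prov_iff_provCuti [DecidableEq Y] [Fintype Y] [Nonempty Y] :
    ∀ (T : Set (Fml Y)) (φ : Fml Y), Prov T φ ↔ ProvCuti T φ :=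
  prov_iff_provCuti_general

end TAI
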